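/- Let T be a recursively axiomatizable extension of Robinson arithmetic Q, with φ chosen to be a Σ₁ formula defining the relation B. If T is consistent, then T does not prove ¬φ(n,t) (although ¬φ(n,t) is true in ω). -/

import Mathlib

namespace Boolos

/-- Terms of the first-order language of arithmetic: variables v₀,v₁,…, 0, successor s, +, ·. -/
inductive Term : Type
  | var : ℕ → Term
  | zero : Term
  | succ : Term → Term
  | add : Term → Term → Term
  | mul : Term → Term → Term
  deriving DecidableEq

/-- Formulas of the first-order language of arithmetic. -/
inductive Formula : Type
  | eq : Term → Term → Formula
  | lt : Term → Term → Formula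
  | not : Formula → Formula
  | and : Formula → Formula → Formula
  | or : Formula → Formula → Formula
  | imp : Formula → Formula → Formula
  | all : ℕ → Formula → Formula
  | ex : ℕ → Formula → Formula
  deriving DecidableEq

/-- The primitive symbols of the language (finitely many apart from the variables). -/
inductive Symbol : Type
  | zero : Symbol
  | succ : Symbol
  | plus : Symbol
  | times : Symbol
  | eqs : Symbol
  | lts : Symbol
  | nots : Symbol
  | ands : Symbol
  | ors : Symbol
  | imps : Symbol
  | alls : Symbol
  | exs : Symbol
  | var : ℕ → Symbol
  deriving DecidableEq

/-- Gödel numbers of the primitive symbols. -/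
def Symbol.code : Symbol → ℕ
  | .zero => 1
  | .succ => 2
  | .plus => 3
  | .times => 4
  | .eqs => 5
  | .lts => 6
  | .nots => 7
  | .ands => 8
  | .ors => 9
  | .imps => 10
  | .alls => 11
  | .exs => 12
  | .var n => 13 + n

/-- The sequence of symbols occurring in a term. -/
def Term.symbols : Term → List Symbol
  | .var i => [.var i]
  | .zero => [.zero]
  | .succ t => .succ :: t.symbols
  | .add t u => t.symbols ++ .plus :: u.symbols
  | .mul t u => t.symbols ++ .times :: u.symbols

/-- The sequence of symbols occurring in a formula. -/
def Formula.symbols : Formula → List Symbol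
  | .eq t u => t.symbols ++ .eqs :: u.symbols
  | .lt t u => t.symbols ++ .lts :: u.symbols
  | .not φ => .nots :: φ.symbols
  | .and φ ψ => φ.symbols ++ .ands :: ψ.symbols
  | .or φ ψ => φ.symbols ++ .ors :: ψ.symbols
  | .imp φ ψ => φ.symbols ++ .imps :: ψ.symbols
  | .all i φ => .alls :: .var i :: φ.symbols
  | .ex i φ => .exs :: .var i :: φ.symbols

/-- |e| : the length (number of symbols) of a term. -/
def Term.length (t : Term) : ℕ := t.symbols.length

/-- |μ| : the length (number of symbols) of a formula. -/
def Formula.length (φ : Formula) : ℕ := φ.symbols.length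

/-- A fixed standard (pairing-based, injective) Gödel numbering of terms. -/
def Term.code : Term → ℕ
  | .var i => Nat.pair 0 i
  | .zero => Nat.pair 1 0
  | .succ t => Nat.pair 2 t.code
  | .add t u => Nat.pair 3 (Nat.pair t.code u.code)
  | .mul t u => Nat.pair 4 (Nat.pair t.code u.code)

/-- ⌜μ⌝ : the Gödel number of a formula. -/
def Formula.gnum : Formula → ℕ
  | .eq t u => Nat.pair 0 (Nat.pair t.code u.code)
  | .lt t u => Nat.pair 1 (Nat.pair t.code u.code)
  | .not φ => Nat.pair 2 φ.gnum
  | .and φ ψ => Nat.pair 3 (Nat.pair φ.gnum ψ.gnum)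
  | .or φ ψ => Nat.pair 4 (Nat.pair φ.gnum ψ.gnum)
  | .imp φ ψ => Nat.pair 5 (Nat.pair φ.gnum ψ.gnum)
  | .all i φ => Nat.pair 6 (Nat.pair i φ.gnum)
  | .ex i φ => Nat.pair 7 (Nat.pair i φ.gnum)

/-- The variables occurring in a term. -/
def Term.varsOf : Term → Finset ℕ
  | .var i => {i}
  | .zero => ∅
  | .succ t => t.varsOf
  | .add t u => t.varsOf ∪ u.varsOf
  | .mul t u => t.varsOf ∪ u.varsOf

/-- All variables (free or bound) occurring in a formula. -/
def Formula.allVars : Formula → Finset ℕ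
  | .eq t u => t.varsOf ∪ u.varsOf
  | .lt t u => t.varsOf ∪ u.varsOf
  | .not φ => φ.allVars
  | .and φ ψ => φ.allVars ∪ ψ.allVars
  | .or φ ψ => φ.allVars ∪ ψ.allVars
  | .imp φ ψ => φ.allVars ∪ ψ.allVars
  | .all i φ => insert i φ.allVars
  | .ex i φ => insert i φ.allVars

/-- The free variables of a formula. -/
def Formula.freeVars : Formula → Finset ℕ
  | .eq t u => t.varsOf ∪ u.varsOf
  | .lt t u => t.varsOf ∪ u.varsOf
  | .not φ => φ.freeVars
  | .and φ ψ => φ.freeVars ∪ ψ.freeVars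
  | .or φ ψ => φ.freeVars ∪ ψ.freeVars
  | .imp φ ψ => φ.freeVars ∪ ψ.freeVars
  | .all i φ => φ.freeVars.erase i
  | .ex i φ => φ.freeVars.erase i

/-- Substitution of a term for a variable in a term. -/
def Term.subst : Term → ℕ → Term → Term
  | .var i, x, s => if i = x then s else .var i
  | .zero, _, _ => .zero
  | .succ t, x, s => .succ (t.subst x s)
  | .add t u, x, s => .add (t.subst x s) (u.subst x s)
  | .mul t u, x, s => .mul (t.subst x s) (u.subst x s)

/-- Substitution of a term for the free occurrences of a variable in a formula. -/
def Formula.subst : Formula → ℕ → Term → Formula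
  | .eq t u, x, s => .eq (t.subst x s) (u.subst x s)
  | .lt t u, x, s => .lt (t.subst x s) (u.subst x s)
  | .not φ, x, s => .not (φ.subst x s)
  | .and φ ψ, x, s => .and (φ.subst x s) (ψ.subst x s)
  | .or φ ψ, x, s => .or (φ.subst x s) (ψ.subst x s)
  | .imp φ ψ, x, s => .imp (φ.subst x s) (ψ.subst x s)
  | .all i φ, x, s => if i = x then .all i φ else .all i (φ.subst x s)
  | .ex i φ, x, s => if i = x then .ex i φ else .ex i (φ.subst x s)

/-- The number of occurrences of a variable in a term. -/
def Term.countOcc : Term → ℕ → ℕ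
  | .var i, x => if i = x then 1 else 0
  | .zero, _ => 0
  | .succ t, x => t.countOcc x
  | .add t u, x => t.countOcc x + u.countOcc x
  | .mul t u, x => t.countOcc x + u.countOcc x

/-- The number of free occurrences of a variable in a formula. -/
def Formula.countFreeOcc : Formula → ℕ → ℕ
  | .eq t u, x => t.countOcc x + u.countOcc x
  | .lt t u, x => t.countOcc x + u.countOcc x
  | .not φ, x => φ.countFreeOcc x
  | .and φ ψ, x => φ.countFreeOcc x + ψ.countFreeOcc x
  | .or φ ψ, x => φ.countFreeOcc x + ψ.countFreeOcc x
  | .imp φ ψ, x => φ.countFreeOcc x + ψ.countFreeOcc x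
  | .all i φ, x => if i = x then 0 else φ.countFreeOcc x
  | .ex i φ, x => if i = x then 0 else φ.countFreeOcc x

/-- The numeral s s … s 0 for a natural number. -/
def numeral : ℕ → Term
  | 0 => .zero
  | n + 1 => .succ (numeral n)

/-- Structures for the language of arithmetic. -/
structure Struct where
  carrier : Type
  zero : carrier
  succ : carrier → carrier
  add : carrier → carrier → carrier
  mul : carrier → carrier → carrier
  lt : carrier → carrier → Prop

/-- The value of a term in a structure under an assignment. -/
def Term.val (M : Struct) (v : ℕ → M.carrier) : Term → M.carrier
  | .var i => v i
  | .zero => M.zero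
  | .succ t => M.succ (Term.val M v t)
  | .add t u => M.add (Term.val M v t) (Term.val M v u)
  | .mul t u => M.mul (Term.val M v t) (Term.val M v u)

/-- Satisfaction of a formula in a structure under an assignment. -/
def Formula.Realize (M : Struct) : (ℕ → M.carrier) → Formula → Prop
  | v, .eq t u => Term.val M v t = Term.val M v u
  | v, .lt t u => M.lt (Term.val M v t) (Term.val M v u)
  | v, .not φ => ¬ Formula.Realize M v φ
  | v, .and φ ψ => Formula.Realize M v φ ∧ Formula.Realize M v ψ
  | v, .or φ ψ => Formula.Realize M v φ ∨ Formula.Realize M v ψ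
  | v, .imp φ ψ => Formula.Realize M v φ → Formula.Realize M v ψ
  | v, .all i φ => ∀ a : M.carrier, Formula.Realize M (Function.update v i a) φ
  | v, .ex i φ => ∃ a : M.carrier, Formula.Realize M (Function.update v i a) φ

/-- ω : the standard model of arithmetic. -/
@[reducible] def stdModel : Struct :=
  { carrier := ℕ, zero := 0, succ := Nat.succ, add := (· + ·), mul := (· * ·),
    lt := (· < ·) }

/-- A formula is true if it holds in the standard model ω (under every assignment). -/
def IsTrue (φ : Formula) : Prop := ∀ v : ℕ → ℕ, Formula.Realize stdModel v φ

/-- The value of a (closed) term in the standard model ω. -/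
def Term.valNat (t : Term) : ℕ := Term.val stdModel (fun _ => 0) t

/-- A sentence is a formula with no free variables. -/
def Formula.IsSentence (φ : Formula) : Prop := φ.freeVars = ∅

/-- Provability from a theory; by the Gödel completeness theorem, identified with
semantic consequence. -/
def Proves (T : Set Formula) (φ : Formula) : Prop :=
  ∀ (M : Struct) (v : ℕ → M.carrier),
    (∀ ψ ∈ T, Formula.Realize M v ψ) → Formula.Realize M v φ

/-- Consistency: no formula is both provable and refutable. -/
def Consistent (T : Set Formula) : Prop :=
  ¬ ∃ φ : Formula, Proves T φ ∧ Proves T (.not φ)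

/-- The biconditional, as an abbreviation. -/
def Formula.iffF (φ ψ : Formula) : Formula := .and (.imp φ ψ) (.imp ψ φ)

def v0 : Term := .var 0
def v1 : Term := .var 1
def v2 : Term := .var 2

/-- The axioms of Robinson arithmetic Q (with < defined as usual). -/
def QAxioms : Set Formula :=
  { .all 0 (.all 1 (.imp (.eq (.succ v0) (.succ v1)) (.eq v0 v1))),
    .all 0 (.not (.eq (.succ v0) .zero)),
    .all 0 (.imp (.not (.eq v0 .zero)) (.ex 1 (.eq v0 (.succ v1)))),
    .all 0 (.eq (.add v0 .zero) v0),
    .all 0 (.all 1 (.eq (.add v0 (.succ v1)) (.succ (.add v0 v1)))),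
    .all 0 (.eq (.mul v0 .zero) .zero),
    .all 0 (.all 1 (.eq (.mul v0 (.succ v1)) (.add (.mul v0 v1) v0))),
    .all 0 (.all 1 (Formula.iffF (.lt v0 v1) (.ex 2 (.eq (.add v2 (.succ v0)) v1)))) }

/-- Pr_S : the set of Gödel numbers of sentences provable in S. -/
def PrSet (T : Set Formula) : Set ℕ :=
  {m | ∃ σ : Formula, σ.IsSentence ∧ Proves T σ ∧ m = σ.gnum}

/-- A formula μ with at most the free variable v₀ names the number i in T
if T ⊢ (∀v₀)(μ(v₀) ↔ v₀ = i). -/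
def Names (T : Set Formula) (μ : Formula) (i : ℕ) : Prop :=
  μ.freeVars ⊆ {0} ∧ Proves T (.all 0 (Formula.iffF μ (.eq v0 (numeral i))))

/-- i is named in T by some formula of length < m. -/
def Nameable (T : Set Formula) (m i : ℕ) : Prop :=
  ∃ μ : Formula, μ.length < m ∧ Names T μ i

/-- φ(v₀) defines the set A in the standard model ω. -/
def DefinesSet (φ : Formula) (A : Set ℕ) : Prop :=
  φ.freeVars ⊆ {0} ∧ ∀ i : ℕ, i ∈ A ↔ IsTrue (φ.subst 0 (numeral i))

/-- A set of natural numbers is definable (in ω). -/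
def Definable (A : Set ℕ) : Prop := ∃ φ : Formula, DefinesSet φ A

/-- φ(v₀,v₁) defines the binary relation R in the standard model ω. -/
def DefinesRel (φ : Formula) (R : ℕ → ℕ → Prop) : Prop :=
  φ.freeVars ⊆ {0, 1} ∧
    ∀ i j : ℕ, R i j ↔ IsTrue ((φ.subst 0 (numeral i)).subst 1 (numeral j))

/-- The relation B of Boolos's construction: (i,j) ∈ B iff some formula μ with at most
the free variable v₀, with ⌜μ⌝ < g(j) and |μ| < j, names i. -/
def BRel (T : Set Formula) (g : ℕ → ℕ) (i j : ℕ) : Prop :=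
  ∃ μ : Formula, μ.gnum < g j ∧ μ.length < j ∧ Names T μ i

/-- g is a recursive function bounding Gödel numbers in terms of length, as in the
construction: whenever all variables of μ are among the first j ones and |μ| < j,
we have ⌜μ⌝ < g(j). -/
def GoodBound (g : ℕ → ℕ) : Prop :=
  Computable g ∧
    ∀ (μ : Formula) (j : ℕ), μ.allVars ⊆ Finset.range j → μ.length < j → μ.gnum < g j

/-- ψ(v₀,v₁) ≔ ¬φ(v₀,v₁) ∧ (∀v₂ < v₀) φ(v₂,v₁). -/
def psiOf (φ : Formula) : Formula :=
  .and (.not φ) (.all 2 (.imp (.lt v2 v0) (φ.subst 0 v2)))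

/-- The closed term t ≔ 10·(k·k). -/
def tTerm (k : ℕ) : Term := .mul (numeral 10) (.mul (numeral k) (numeral k))

/-- T is recursively axiomatizable: it has an axiom set (of sentences) whose set of
Gödel numbers is recursive and which has the same theorems as T. -/
def RecursivelyAxiomatizable (T : Set Formula) : Prop :=
  ∃ A : Set Formula, (∀ σ ∈ A, σ.IsSentence) ∧
    ComputablePred (fun m : ℕ => ∃ σ ∈ A, m = σ.gnum) ∧
    ∀ φ : Formula, Proves A φ ↔ Proves T φ

/-- Δ₀ (bounded) formulas. -/
inductive IsDelta0 : Formula → Prop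
  | eq (t u : Term) : IsDelta0 (.eq t u)
  | lt (t u : Term) : IsDelta0 (.lt t u)
  | not {φ : Formula} : IsDelta0 φ → IsDelta0 (.not φ)
  | and {φ ψ : Formula} : IsDelta0 φ → IsDelta0 ψ → IsDelta0 (.and φ ψ)
  | or {φ ψ : Formula} : IsDelta0 φ → IsDelta0 ψ → IsDelta0 (.or φ ψ)
  | imp {φ ψ : Formula} : IsDelta0 φ → IsDelta0 ψ → IsDelta0 (.imp φ ψ)
  | ball {φ : Formula} (i : ℕ) (t : Term) : i ∉ t.varsOf → IsDelta0 φ →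
      IsDelta0 (.all i (.imp (.lt (.var i) t) φ))
  | bex {φ : Formula} (i : ℕ) (t : Term) : i ∉ t.varsOf → IsDelta0 φ →
      IsDelta0 (.ex i (.and (.lt (.var i) t) φ))

/-- A formula is Σ₁ if it is of the form (∃vᵢ)μ for a Δ₀ formula μ. -/
def IsSigma1 (φ : Formula) : Prop := ∃ (i : ℕ) (μ : Formula), IsDelta0 μ ∧ φ = .ex i μ

/-! Write `j = 10k²` for the value of `t` and `ψ(v₀, t)` for "v₀ is the least element failing
`φ(·, t)`". Every `m < n` is named by a formula of length `< j`; renaming its variables to the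
first `j` brings its Gödel number below `g j`, so `B(m, j)` holds. Since `n` is not so named,
`¬B(n, j)`, i.e. `¬φ(n, t)` is true. If `T` proved `¬φ(n, t)`, then in every model of `T` the
relation `φ(·, t)` would hold at the standard `m < n` (upward persistence of Σ₁ truths) and fail
at `n`; as every element of a model of `Q` is a standard number `≤ n` or lies above `n`, the
least failure is `n`, so `ψ(v₀, t)` names `n`. But `|ψ(v₀, t)| < 10k²`, against the choice of `n`.
-/

@[simp] theorem Term.varsOf_numeral (n : ℕ) : (numeral n).varsOf = ∅ := by
  induction n <;> simp_all [numeral, Term.varsOf]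

@[simp] theorem Term.length_numeral (n : ℕ) : (numeral n).length = n + 1 := by
  induction n <;> simp_all [numeral, Term.length, Term.symbols]

theorem Formula.length_pos (φ : Formula) : 0 < φ.length := by
  cases φ <;> simp [Formula.length, Formula.symbols]

theorem Term.length_subst (x : ℕ) (s : Term) (t : Term) :
    (t.subst x s).length ≤ t.length + t.countOcc x * s.length := by
  induction t with
  | var i => by_cases h : i = x <;> simp [Term.subst, Term.countOcc, Term.length, Term.symbols, h]
  | zero => simp [Term.subst, Term.countOcc]
  | succ t ih =>
      simp only [Term.subst, Term.countOcc, Term.length, Term.symbols, List.length_cons] at *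
      omega
  | add t u iht ihu | mul t u iht ihu =>
      simp only [Term.subst, Term.countOcc, Term.length, Term.symbols, List.length_append,
        List.length_cons] at *
      nlinarith

theorem Formula.length_subst (x : ℕ) (s : Term) (φ : Formula) :
    (φ.subst x s).length ≤ φ.length + φ.countFreeOcc x * s.length := by
  induction φ with
  | eq t u | lt t u =>
      have := Term.length_subst x s t
      have := Term.length_subst x s u
      simp only [Formula.subst, Formula.countFreeOcc, Formula.length, Formula.symbols,
        Term.length, List.length_append, List.length_cons] at *
      nlinarith
  | not φ ih =>
      simp only [Formula.subst, Formula.countFreeOcc, Formula.length, Formula.symbols,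
        List.length_cons] at *
      omega
  | and φ ψ ih₁ ih₂ | or φ ψ ih₁ ih₂ | imp φ ψ ih₁ ih₂ =>
      simp only [Formula.subst, Formula.countFreeOcc, Formula.length, Formula.symbols,
        List.length_append, List.length_cons] at *
      nlinarith
  | all i φ ih | ex i φ ih =>
      by_cases h : i = x
      · simp [Formula.subst, Formula.countFreeOcc, h]
      · simp only [Formula.subst, Formula.countFreeOcc, h, ↓reduceIte, Formula.length,
          Formula.symbols, List.length_cons] at *
        omega

theorem Term.varsOf_subst (x : ℕ) (s : Term) (t : Term) :
    (t.subst x s).varsOf ⊆ t.varsOf.erase x ∪ s.varsOf := by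
  induction t with
  | var i => by_cases h : i = x <;> simp [Term.subst, Term.varsOf, h]
  | zero => simp [Term.subst, Term.varsOf]
  | succ t ih => exact ih
  | add t u iht ihu | mul t u iht ihu =>
      simp only [Term.subst, Term.varsOf, Finset.erase_union_distrib]
      exact Finset.union_subset (iht.trans (by gcongr; simp)) (ihu.trans (by gcongr; simp))

theorem Formula.freeVars_subst (x : ℕ) (s : Term) (φ : Formula) :
    (φ.subst x s).freeVars ⊆ φ.freeVars.erase x ∪ s.varsOf := by
  induction φ with
  | eq t u | lt t u =>
      simp only [Formula.subst, Formula.freeVars, Finset.erase_union_distrib]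
      exact Finset.union_subset ((Term.varsOf_subst x s t).trans (by gcongr; simp))
        ((Term.varsOf_subst x s u).trans (by gcongr; simp))
  | not φ ih => exact ih
  | and φ ψ ih₁ ih₂ | or φ ψ ih₁ ih₂ | imp φ ψ ih₁ ih₂ =>
      simp only [Formula.subst, Formula.freeVars, Finset.erase_union_distrib]
      exact Finset.union_subset (ih₁.trans (by gcongr; simp)) (ih₂.trans (by gcongr; simp))
  | all i φ ih | ex i φ ih =>
      by_cases h : i = x
      · subst h
        simp only [Formula.subst, ↓reduceIte, Formula.freeVars, Finset.erase_idem]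
        exact Finset.subset_union_left
      · simp only [Formula.subst, h, ↓reduceIte, Formula.freeVars]
        intro y hy
        have := ih (Finset.mem_of_mem_erase hy)
        simp only [Finset.mem_union, Finset.mem_erase] at this hy ⊢
        tauto

def Term.ren (f : ℕ → ℕ) : Term → Term
  | .var i => .var (f i)
  | .zero => .zero
  | .succ t => .succ (t.ren f)
  | .add t u => .add (t.ren f) (u.ren f)
  | .mul t u => .mul (t.ren f) (u.ren f)

def Formula.ren (f : ℕ → ℕ) : Formula → Formula
  | .eq t u => .eq (t.ren f) (u.ren f)
  | .lt t u => .lt (t.ren f) (u.ren f)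
  | .not φ => .not (φ.ren f)
  | .and φ ψ => .and (φ.ren f) (ψ.ren f)
  | .or φ ψ => .or (φ.ren f) (ψ.ren f)
  | .imp φ ψ => .imp (φ.ren f) (ψ.ren f)
  | .all i φ => .all (f i) (φ.ren f)
  | .ex i φ => .ex (f i) (φ.ren f)

@[simp] theorem Term.ren_numeral (f : ℕ → ℕ) (n : ℕ) : (numeral n).ren f = numeral n := by
  induction n <;> simp_all [numeral, Term.ren]

theorem Term.length_ren (f : ℕ → ℕ) (t : Term) : (t.ren f).length = t.length := by
  induction t <;> simp_all [Term.ren, Term.length, Term.symbols]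

theorem Formula.length_ren (f : ℕ → ℕ) (φ : Formula) : (φ.ren f).length = φ.length := by
  have := Term.length_ren f
  induction φ <;> simp_all [Formula.ren, Formula.length, Formula.symbols, Term.length]

theorem Term.varsOf_ren (f : ℕ → ℕ) (t : Term) : (t.ren f).varsOf = t.varsOf.image f := by
  induction t <;> simp_all [Term.ren, Term.varsOf, Finset.image_union]

theorem Formula.allVars_ren (f : ℕ → ℕ) (φ : Formula) :
    (φ.ren f).allVars = φ.allVars.image f := by
  induction φ <;>
    simp_all [Formula.ren, Formula.allVars, Term.varsOf_ren, Finset.image_union,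
      Finset.image_insert]

theorem Formula.freeVars_ren_subset (f : ℕ → ℕ) (φ : Formula) :
    (φ.ren f).freeVars ⊆ φ.freeVars.image f := by
  induction φ with
  | eq t u | lt t u => simp [Formula.ren, Formula.freeVars, Term.varsOf_ren, Finset.image_union]
  | not φ ih => exact ih
  | and φ ψ ih₁ ih₂ | or φ ψ ih₁ ih₂ | imp φ ψ ih₁ ih₂ =>
      simpa only [Formula.ren, Formula.freeVars, Finset.image_union] using
        Finset.union_subset_union ih₁ ih₂
  | all i φ ih | ex i φ ih =>
      simp only [Formula.ren, Formula.freeVars]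
      intro y hy
      obtain ⟨z, hz, rfl⟩ := Finset.mem_image.1 (ih (Finset.mem_of_mem_erase hy))
      exact Finset.mem_image_of_mem f
        (Finset.mem_erase.2 ⟨fun hzi => (Finset.mem_erase.1 hy).1 (hzi ▸ rfl), hz⟩)

theorem Term.card_varsOf_le (t : Term) : t.varsOf.card ≤ t.length := by
  induction t with
  | var i => simp [Term.varsOf, Term.length, Term.symbols]
  | zero => simp [Term.varsOf]
  | succ t ih => simp only [Term.varsOf, Term.length, Term.symbols, List.length_cons] at *; omega
  | add t u iht ihu | mul t u iht ihu =>
      have := Finset.card_union_le t.varsOf u.varsOf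
      simp only [Term.varsOf, Term.length, Term.symbols, List.length_append,
        List.length_cons] at *; omega

theorem Formula.card_allVars_le (φ : Formula) : φ.allVars.card ≤ φ.length := by
  induction φ with
  | eq t u | lt t u =>
      have := Finset.card_union_le t.varsOf u.varsOf
      have := Term.card_varsOf_le t
      have := Term.card_varsOf_le u
      simp only [Formula.allVars, Formula.length, Formula.symbols, Term.length, List.length_append,
        List.length_cons] at *; omega
  | not φ ih =>
      simp only [Formula.allVars, Formula.length, Formula.symbols, List.length_cons] at *; omega
  | and φ ψ ih₁ ih₂ | or φ ψ ih₁ ih₂ | imp φ ψ ih₁ ih₂ =>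
      have := Finset.card_union_le φ.allVars ψ.allVars
      simp only [Formula.allVars, Formula.length, Formula.symbols, List.length_append,
        List.length_cons] at *; omega
  | all i φ ih | ex i φ ih =>
      have := Finset.card_insert_le i φ.allVars
      simp only [Formula.allVars, Formula.length, Formula.symbols, List.length_cons] at *; omega

section Semantics

variable {M : Struct}

theorem Term.val_congr {v w : ℕ → M.carrier} {t : Term} (h : ∀ x ∈ t.varsOf, v x = w x) :
    t.val M v = t.val M w := by
  induction t with
  | var i => exact h i (by simp [Term.varsOf])
  | zero => rfl
  | succ t ih => exact congrArg M.succ (ih h)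
  | add t u iht ihu | mul t u iht ihu =>
      simp only [Term.varsOf, Finset.mem_union] at h
      simp only [Term.val, iht fun x hx => h x (.inl hx), ihu fun x hx => h x (.inr hx)]

theorem Formula.realize_congr {φ : Formula} {v w : ℕ → M.carrier}
    (h : ∀ x ∈ φ.freeVars, v x = w x) : φ.Realize M v ↔ φ.Realize M w := by
  induction φ generalizing v w with
  | eq t u | lt t u =>
      simp only [Formula.freeVars, Finset.mem_union] at h
      simp only [Formula.Realize, Term.val_congr fun x hx => h x (.inl hx),
        Term.val_congr (t := u) fun x hx => h x (.inr hx)]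
  | not φ ih => exact not_congr (ih h)
  | and φ ψ ih₁ ih₂ | or φ ψ ih₁ ih₂ | imp φ ψ ih₁ ih₂ =>
      simp only [Formula.freeVars, Finset.mem_union] at h
      simp only [Formula.Realize, ih₁ fun x hx => h x (.inl hx), ih₂ fun x hx => h x (.inr hx)]
  | all i φ ih | ex i φ ih =>
      simp only [Formula.freeVars, Finset.mem_erase] at h
      have key (a : M.carrier) : φ.Realize M (Function.update v i a) ↔
          φ.Realize M (Function.update w i a) := ih fun x hx => by
        by_cases hxi : x = i
        · simp [hxi]
        · simp [hxi, h x ⟨hxi, hx⟩]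
      simp only [Formula.Realize, key]

theorem Formula.realize_of_isSentence {σ : Formula} (hσ : σ.IsSentence) (v w : ℕ → M.carrier) :
    σ.Realize M v ↔ σ.Realize M w :=
  Formula.realize_congr fun x hx => by rw [show σ.freeVars = ∅ from hσ] at hx; simp at hx

theorem Term.val_of_closed {t : Term} (ht : t.varsOf = ∅) (v w : ℕ → M.carrier) :
    t.val M v = t.val M w :=
  Term.val_congr fun x hx => by simp [ht] at hx

theorem Proves.realize {T : Set Formula} (hT : ∀ σ ∈ T, σ.IsSentence) {θ : Formula}
    (h : Proves T θ) {v : ℕ → M.carrier} (hv : ∀ ψ ∈ T, ψ.Realize M v) (w : ℕ → M.carrier) :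
    θ.Realize M w :=
  h M w fun ψ hψ => (Formula.realize_of_isSentence (hT ψ hψ) v w).1 (hv ψ hψ)

theorem Term.val_update_of_not_mem {t : Term} {i : ℕ} (hi : i ∉ t.varsOf)
    (v : ℕ → M.carrier) (a : M.carrier) : t.val M (Function.update v i a) = t.val M v :=
  Term.val_congr fun x hx => Function.update_of_ne (fun h : x = i => hi (h ▸ hx)) a v

theorem Term.val_subst {v : ℕ → M.carrier} {x : ℕ} {s : Term} (t : Term) :
    (t.subst x s).val M v = t.val M (Function.update v x (s.val M v)) := by
  induction t with
  | var i => by_cases h : i = x <;> simp [Term.subst, Term.val, h]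
  | zero => rfl
  | succ t ih => simp [Term.subst, Term.val, ih]
  | add t u iht ihu | mul t u iht ihu => simp [Term.subst, Term.val, iht, ihu]

theorem Formula.realize_subst {x : ℕ} {s : Term} {φ : Formula}
    (hs : ∀ y ∈ s.varsOf, y ∉ φ.allVars) (v : ℕ → M.carrier) :
    (φ.subst x s).Realize M v ↔ φ.Realize M (Function.update v x (s.val M v)) := by
  induction φ generalizing v with
  | eq t u | lt t u => simp [Formula.subst, Formula.Realize, Term.val_subst]
  | not φ ih => exact not_congr (ih hs v)
  | and φ ψ ih₁ ih₂ | or φ ψ ih₁ ih₂ | imp φ ψ ih₁ ih₂ =>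
      simp only [Formula.allVars, Finset.mem_union, not_or] at hs
      simp only [Formula.subst, Formula.Realize, ih₁ (fun y hy => (hs y hy).1),
        ih₂ (fun y hy => (hs y hy).2)]
  | all i φ ih | ex i φ ih =>
      simp only [Formula.allVars, Finset.mem_insert, not_or] at hs
      by_cases hix : i = x
      · subst hix
        simp only [Formula.subst, ↓reduceIte, Formula.Realize, Function.update_idem]
      · simp only [Formula.subst, hix, ↓reduceIte, Formula.Realize,
          ih (fun y hy => (hs y hy).2)]
        have hsi : i ∉ s.varsOf := fun h => (hs i h).1 rfl
        simp only [Term.val_update_of_not_mem hsi, Function.update_comm hix]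

theorem Formula.realize_subst_of_closed {x : ℕ} {s : Term} (hs : s.varsOf = ∅) (φ : Formula)
    (v : ℕ → M.carrier) :
    (φ.subst x s).Realize M v ↔ φ.Realize M (Function.update v x (s.val M v)) :=
  Formula.realize_subst (by simp [hs]) v

theorem Term.val_ren (f : ℕ → ℕ) (v : ℕ → M.carrier) (t : Term) :
    (t.ren f).val M v = t.val M (v ∘ f) := by
  induction t <;> simp_all [Term.ren, Term.val]

theorem Formula.realize_ren {f : ℕ → ℕ} (hf : Function.Injective f) (φ : Formula)
    (v : ℕ → M.carrier) : (φ.ren f).Realize M v ↔ φ.Realize M (v ∘ f) := by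
  induction φ generalizing v with
  | eq t u | lt t u => simp [Formula.ren, Formula.Realize, Term.val_ren]
  | not φ ih => exact not_congr (ih v)
  | and φ ψ ih₁ ih₂ | or φ ψ ih₁ ih₂ | imp φ ψ ih₁ ih₂ =>
      simp only [Formula.ren, Formula.Realize, ih₁, ih₂]
  | all i φ ih | ex i φ ih =>
      simp only [Formula.ren, Formula.Realize, ih, Function.update_comp_eq_of_injective _ hf]

end Semantics

def Struct.emb (M : Struct) : ℕ → M.carrier
  | 0 => M.zero
  | n + 1 => M.succ (M.emb n)

@[simp] theorem Struct.emb_stdModel (n : ℕ) : stdModel.emb n = n := by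
  induction n <;> simp_all [Struct.emb]

@[simp] theorem Term.val_numeral {M : Struct} (v : ℕ → M.carrier) (n : ℕ) :
    (numeral n).val M v = M.emb n := by
  induction n <;> simp_all [numeral, Term.val, Struct.emb]

def Struct.IsQModel (M : Struct) : Prop := ∀ ψ ∈ QAxioms, ∀ v : ℕ → M.carrier, ψ.Realize M v

theorem Struct.isQModel_of_realize {T : Set Formula} (hT : ∀ σ ∈ T, σ.IsSentence)
    (hQT : QAxioms ⊆ T) {M : Struct} {v : ℕ → M.carrier} (hv : ∀ ψ ∈ T, ψ.Realize M v) :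
    M.IsQModel :=
  fun ψ hψ w => (Formula.realize_of_isSentence (hT ψ (hQT hψ)) v w).1 (hv ψ (hQT hψ))

namespace Struct.IsQModel

variable {M : Struct}

theorem axioms (hM : M.IsQModel) :
    (∀ a b, M.succ a = M.succ b → a = b) ∧ (∀ a, M.succ a ≠ M.zero) ∧
    (∀ a, a ≠ M.zero → ∃ b, a = M.succ b) ∧ (∀ a, M.add a M.zero = a) ∧
    (∀ a b, M.add a (M.succ b) = M.succ (M.add a b)) ∧ (∀ a, M.mul a M.zero = M.zero) ∧
    (∀ a b, M.mul a (M.succ b) = M.add (M.mul a b) a) ∧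
    (∀ a b, M.lt a b ↔ ∃ c, M.add c (M.succ a) = b) := by
  have h := fun ψ hψ => hM ψ hψ (fun _ => M.zero)
  simp only [QAxioms, Set.mem_insert_iff, Set.mem_singleton_iff, forall_eq_or_imp,
    forall_eq] at h
  simpa [Formula.Realize, Formula.iffF, Term.val, v0, v1, v2, iff_def] using h

variable (hM : M.IsQModel)
include hM

theorem succ_inj {a b : M.carrier} (h : M.succ a = M.succ b) : a = b := hM.axioms.1 a b h

theorem succ_ne_zero (a : M.carrier) : M.succ a ≠ M.zero := hM.axioms.2.1 a

theorem zero_or_succ (a : M.carrier) : a = M.zero ∨ ∃ b, a = M.succ b :=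
  or_iff_not_imp_left.2 (hM.axioms.2.2.1 a)

theorem add_zero (a : M.carrier) : M.add a M.zero = a := hM.axioms.2.2.2.1 a

theorem add_succ (a b : M.carrier) : M.add a (M.succ b) = M.succ (M.add a b) :=
  hM.axioms.2.2.2.2.1 a b

theorem mul_zero (a : M.carrier) : M.mul a M.zero = M.zero := hM.axioms.2.2.2.2.2.1 a

theorem mul_succ (a b : M.carrier) : M.mul a (M.succ b) = M.add (M.mul a b) a :=
  hM.axioms.2.2.2.2.2.2.1 a b

theorem lt_iff (a b : M.carrier) : M.lt a b ↔ ∃ c, M.add c (M.succ a) = b :=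
  hM.axioms.2.2.2.2.2.2.2 a b

theorem emb_add (a b : ℕ) : M.add (M.emb a) (M.emb b) = M.emb (a + b) := by
  induction b with
  | zero => exact hM.add_zero _
  | succ b ih => rw [Struct.emb, hM.add_succ, ih]; rfl

theorem emb_mul (a b : ℕ) : M.mul (M.emb a) (M.emb b) = M.emb (a * b) := by
  induction b with
  | zero => exact hM.mul_zero _
  | succ b ih => rw [Struct.emb, hM.mul_succ, ih, hM.emb_add, Nat.mul_succ]

theorem emb_injective : Function.Injective M.emb := by
  intro a b h
  induction a generalizing b with
  | zero => cases b with
    | zero => rfl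
    | succ b => exact absurd h.symm (hM.succ_ne_zero _)
  | succ a ih => cases b with
    | zero => exact absurd h (hM.succ_ne_zero _)
    | succ b => exact congrArg _ (ih (hM.succ_inj h))

theorem succ_add_emb (d : M.carrier) (n : ℕ) :
    M.add (M.succ d) (M.emb n) = M.add d (M.emb (n + 1)) := by
  induction n with
  | zero => simp only [Struct.emb, hM.add_zero, hM.add_succ]
  | succ n ih =>
      calc M.add (M.succ d) (M.emb (n + 1)) = M.succ (M.add (M.succ d) (M.emb n)) :=
            hM.add_succ _ _
        _ = M.succ (M.add d (M.emb (n + 1))) := by rw [ih]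
        _ = M.add d (M.emb (n + 2)) := (hM.add_succ _ _).symm

theorem eq_emb_of_add_eq_emb (n : ℕ) {a c : M.carrier} (h : M.add c a = M.emb n) :
    ∃ m ≤ n, a = M.emb m := by
  induction n generalizing a with
  | zero =>
      obtain rfl | ⟨b, rfl⟩ := hM.zero_or_succ a
      · exact ⟨0, le_rfl, rfl⟩
      · exact absurd (hM.add_succ c b ▸ h) (hM.succ_ne_zero _)
  | succ n ih =>
      obtain rfl | ⟨b, rfl⟩ := hM.zero_or_succ a
      · exact ⟨0, Nat.zero_le _, rfl⟩
      · obtain ⟨m, hm, rfl⟩ := ih (hM.succ_inj (hM.add_succ c b ▸ h))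
        exact ⟨m + 1, by omega, rfl⟩

theorem lt_emb_iff (a : M.carrier) (n : ℕ) : M.lt a (M.emb n) ↔ ∃ m < n, a = M.emb m := by
  rw [hM.lt_iff]
  constructor
  · rintro ⟨c, hc⟩
    obtain ⟨_ | m, hm, he⟩ := hM.eq_emb_of_add_eq_emb n hc
    · exact absurd he (hM.succ_ne_zero a)
    · exact ⟨m, hm, hM.succ_inj he⟩
  · rintro ⟨m, hm, rfl⟩
    exact ⟨M.emb (n - (m + 1)), by rw [← Struct.emb, hM.emb_add, Nat.sub_add_cancel hm]⟩

theorem emb_lt_emb {m n : ℕ} : M.lt (M.emb m) (M.emb n) ↔ m < n := by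
  rw [hM.lt_emb_iff]
  exact ⟨fun ⟨_, hm', he⟩ => hM.emb_injective he ▸ hm', fun h => ⟨m, h, rfl⟩⟩

theorem eq_emb_or_emb_lt (n : ℕ) (a : M.carrier) :
    (∃ m ≤ n, a = M.emb m) ∨ M.lt (M.emb n) a := by
  induction n with
  | zero =>
      obtain rfl | ⟨b, rfl⟩ := hM.zero_or_succ a
      · exact .inl ⟨0, le_rfl, rfl⟩
      · exact .inr ((hM.lt_iff _ _).2 ⟨b, by simp only [Struct.emb, hM.add_succ, hM.add_zero]⟩)
  | succ n ih =>
      obtain ⟨m, hm, rfl⟩ | h := ih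
      · exact .inl ⟨m, by omega, rfl⟩
      obtain ⟨c, rfl⟩ := (hM.lt_iff _ _).1 h
      obtain rfl | ⟨d, rfl⟩ := hM.zero_or_succ c
      · exact .inl ⟨n + 1, le_rfl, (hM.emb_add 0 (n + 1)).trans (by rw [Nat.zero_add])⟩
      · exact .inr ((hM.lt_iff _ _).2 ⟨d, (hM.succ_add_emb d (n + 1)).symm⟩)

theorem least_iff {P : M.carrier → Prop} {n : ℕ} (hn : ¬ P (M.emb n))
    (hlt : ∀ m < n, P (M.emb m)) (a : M.carrier) :
    (¬ P a ∧ ∀ b, M.lt b a → P b) ↔ a = M.emb n := by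
  constructor
  · rintro ⟨ha, hbelow⟩
    obtain ⟨m, hm, rfl⟩ | hna := hM.eq_emb_or_emb_lt n a
    · obtain rfl | hm := hm.eq_or_lt
      · rfl
      · exact absurd (hlt m hm) ha
    · exact absurd (hbelow _ hna) hn
  · rintro rfl
    refine ⟨hn, fun b hb => ?_⟩
    obtain ⟨m, hm, rfl⟩ := (hM.lt_emb_iff b n).1 hb
    exact hlt m hm

theorem val_comp_emb (v : ℕ → ℕ) (t : Term) :
    t.val M (M.emb ∘ v) = M.emb (t.val stdModel v) := by
  induction t with
  | var i => rfl
  | zero => rfl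
  | succ t ih => simp only [Term.val, ih]; rfl
  | add t u iht ihu => simp only [Term.val, iht, ihu, hM.emb_add]
  | mul t u iht ihu => simp only [Term.val, iht, ihu, hM.emb_mul]

/-- In a model of `Q` everything below a standard number is standard, so bounded quantifiers
see only standard elements. -/
theorem realize_comp_emb_iff {μ : Formula} (hμ : IsDelta0 μ) (v : ℕ → ℕ) :
    μ.Realize M (M.emb ∘ v) ↔ μ.Realize stdModel v := by
  induction hμ generalizing v with
  | eq t u => simp only [Formula.Realize, hM.val_comp_emb, hM.emb_injective.eq_iff]
  | lt t u => simp only [Formula.Realize, hM.val_comp_emb, hM.emb_lt_emb]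
  | not _ ih => exact not_congr (ih v)
  | and _ _ ih₁ ih₂ | or _ _ ih₁ ih₂ | imp _ _ ih₁ ih₂ => simp only [Formula.Realize, ih₁, ih₂]
  | ball i t hit _ ih =>
      simp only [Formula.Realize, Term.val, Term.val_update_of_not_mem hit, Function.update_self,
        hM.val_comp_emb]
      constructor
      · intro h a ha
        rw [← ih, Function.comp_update]
        exact h _ (hM.emb_lt_emb.2 ha)
      · intro h b hb
        obtain ⟨m, hm, rfl⟩ := (hM.lt_emb_iff b _).1 hb
        rw [← Function.comp_update, ih]
        exact h m hm
  | bex i t hit _ ih =>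
      simp only [Formula.Realize, Term.val, Term.val_update_of_not_mem hit, Function.update_self,
        hM.val_comp_emb]
      constructor
      · rintro ⟨b, hb, h⟩
        obtain ⟨m, hm, rfl⟩ := (hM.lt_emb_iff b _).1 hb
        rw [← Function.comp_update, ih] at h
        exact ⟨m, hm, h⟩
      · rintro ⟨a, ha, h⟩
        rw [← ih, Function.comp_update] at h
        exact ⟨_, hM.emb_lt_emb.2 ha, h⟩

theorem realize_comp_emb_of_isSigma1 {σ : Formula} (hσ : IsSigma1 σ) {v : ℕ → ℕ}
    (h : σ.Realize stdModel v) : σ.Realize M (M.emb ∘ v) := by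
  obtain ⟨i, μ, hμ, rfl⟩ := hσ
  obtain ⟨a, ha⟩ := h
  exact ⟨M.emb a, by rw [← Function.comp_update, hM.realize_comp_emb_iff hμ]; exact ha⟩

end Struct.IsQModel

def rankRenaming (S : Finset ℕ) (j x : ℕ) : ℕ :=
  if x ∈ S then (S.filter (· < x)).card else j + x

theorem rankRenaming_lt {S : Finset ℕ} {j x : ℕ} (hS : S.card ≤ j) (hx : x ∈ S) :
    rankRenaming S j x < j := by
  rw [rankRenaming, if_pos hx]
  exact lt_of_lt_of_le (Finset.card_lt_card (Finset.filter_ssubset.2 ⟨x, hx, lt_irrefl x⟩)) hS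

theorem rankRenaming_zero (S : Finset ℕ) (j : ℕ) (h0 : 0 ∈ S) : rankRenaming S j 0 = 0 := by
  simp [rankRenaming, h0]

theorem rankRenaming_strictMonoOn (S : Finset ℕ) (j : ℕ) :
    StrictMonoOn (rankRenaming S j) S := by
  intro x hx y hy hxy
  simp only [rankRenaming, Finset.mem_coe.1 hx, Finset.mem_coe.1 hy, if_true]
  refine Finset.card_lt_card ⟨fun z hz => ?_, fun h => ?_⟩
  · simp only [Finset.mem_filter] at hz ⊢
    exact ⟨hz.1, hz.2.trans hxy⟩
  · exact lt_irrefl x (Finset.mem_filter.1 (h (Finset.mem_filter.2 ⟨hx, hxy⟩))).2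

theorem rankRenaming_injective {S : Finset ℕ} {j : ℕ} (hS : S.card ≤ j) :
    Function.Injective (rankRenaming S j) := by
  intro x y hxy
  by_cases hx : x ∈ S <;> by_cases hy : y ∈ S
  · exact (rankRenaming_strictMonoOn S j).injOn hx hy hxy
  · have := rankRenaming_lt hS hx
    rw [hxy, rankRenaming, if_neg hy] at this
    omega
  · have := rankRenaming_lt hS hy
    rw [← hxy, rankRenaming, if_neg hx] at this
    omega
  · simp only [rankRenaming, if_neg hx, if_neg hy] at hxy
    omega

theorem Proves.ren {T : Set Formula} (hT : ∀ σ ∈ T, σ.IsSentence) {Φ : Formula}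
    (h : Proves T Φ) {f : ℕ → ℕ} (hf : Function.Injective f) : Proves T (Φ.ren f) := by
  intro M v hv
  rw [Formula.realize_ren hf]
  exact h M (v ∘ f) fun ψ hψ => (Formula.realize_of_isSentence (hT ψ hψ) _ _).1 (hv ψ hψ)

/-- A formula of length `< j` has fewer than `j` variables, so renaming them to their ranks
yields a formula naming the same number whose variables are among the first `j`. -/
theorem BRel.of_nameable {T : Set Formula} (hT : ∀ σ ∈ T, σ.IsSentence) {g : ℕ → ℕ}
    (hg : ∀ (μ : Formula) (j : ℕ), μ.allVars ⊆ Finset.range j → μ.length < j → μ.gnum < g j)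
    {j m : ℕ} (h : Nameable T j m) : BRel T g m j := by
  obtain ⟨μ, hlen, hfree, hprov⟩ := h
  set S := insert 0 μ.allVars
  have hS : S.card ≤ j :=
    (Finset.card_insert_le _ _).trans (Nat.succ_le_of_lt ((μ.card_allVars_le).trans_lt hlen))
  have hf0 := rankRenaming_zero S j (Finset.mem_insert_self _ _)
  have hlen' : (μ.ren (rankRenaming S j)).length < j := by rwa [Formula.length_ren]
  refine ⟨μ.ren (rankRenaming S j), hg _ j ?_ hlen', hlen', ?_, ?_⟩
  · rw [Formula.allVars_ren, Finset.image_subset_iff]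
    exact fun x hx => Finset.mem_range.2 (rankRenaming_lt hS (Finset.mem_insert_of_mem hx))
  · intro x hx
    obtain ⟨y, hy, rfl⟩ := Finset.mem_image.1 (Formula.freeVars_ren_subset _ _ hx)
    rw [Finset.mem_singleton.1 (hfree hy), hf0]
    exact Finset.mem_singleton_self 0
  · simpa [Formula.ren, Formula.iffF, Term.ren, v0, hf0] using
      hprov.ren hT (rankRenaming_injective hS)

/-- `φ(a, b)` in `M`; only meaningful when the free variables of `φ` are among `v₀, v₁`. -/
def Formula.Realize₂ (M : Struct) (φ : Formula) (a b : M.carrier) : Prop :=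
  φ.Realize M (Function.update (Function.update (fun _ => M.zero) 1 b) 0 a)

section Realize₂

variable {M : Struct} {φ : Formula}

theorem Formula.realize_iff_realize₂ (hφ : φ.freeVars ⊆ {0, 1}) (v : ℕ → M.carrier) :
    φ.Realize M v ↔ φ.Realize₂ M (v 0) (v 1) :=
  Formula.realize_congr fun x hx => by
    rcases Finset.mem_insert.1 (hφ hx) with rfl | hx1
    · simp
    · rw [Finset.mem_singleton.1 hx1]; simp

theorem Formula.realize_subst_subst (hφ : φ.freeVars ⊆ {0, 1}) {a s : Term}
    (ha : a.varsOf = ∅) (hs : s.varsOf = ∅) (v : ℕ → M.carrier) :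
    ((φ.subst 0 a).subst 1 s).Realize M v ↔ φ.Realize₂ M (a.val M v) (s.val M v) := by
  rw [Formula.realize_subst_of_closed hs, Formula.realize_subst_of_closed ha,
    Formula.realize_iff_realize₂ hφ, Term.val_of_closed ha _ v]
  simp

theorem DefinesRel.iff_realize₂ {R : ℕ → ℕ → Prop} (h : DefinesRel φ R) (i j : ℕ) :
    R i j ↔ φ.Realize₂ stdModel i j := by
  simp [h.2 i j, IsTrue, Formula.realize_subst_subst h.1]

theorem Struct.IsQModel.realize₂_emb_of_isSigma1 (hM : M.IsQModel) (hφ : IsSigma1 φ) {a b : ℕ}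
    (h : φ.Realize₂ stdModel a b) : φ.Realize₂ M (M.emb a) (M.emb b) := by
  have hemb : Function.update (Function.update (fun _ => M.zero) 1 (M.emb b)) 0 (M.emb a) =
      M.emb ∘ Function.update (Function.update (fun _ => 0) 1 b) 0 a := by
    rw [Function.comp_update, Function.comp_update]; rfl
  rw [Formula.Realize₂, hemb]
  exact hM.realize_comp_emb_of_isSigma1 hφ h

end Realize₂

section Berry

variable {T : Set Formula} {M : Struct} {φ : Formula}

theorem freeVars_psiOf_subset (hφ : φ.freeVars ⊆ {0, 1}) : (psiOf φ).freeVars ⊆ {0, 1} := by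
  intro x hx
  simp only [psiOf, Formula.freeVars, v0, v2, Term.varsOf, Finset.mem_union,
    Finset.mem_erase] at hx
  rcases hx with hx | ⟨hx2, (hx | hx) | hx⟩
  · exact hφ hx
  · exact absurd (Finset.mem_singleton.1 hx) hx2
  · simp [Finset.mem_singleton.1 hx]
  · rcases Finset.mem_union.1 (Formula.freeVars_subst 0 v2 φ hx) with hx | hx
    · exact hφ (Finset.mem_of_mem_erase hx)
    · exact absurd (Finset.mem_singleton.1 hx) hx2

theorem realize_psiOf (hφ : φ.freeVars ⊆ {0, 1}) (hφ2 : 2 ∉ φ.allVars) (v : ℕ → M.carrier) :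
    (psiOf φ).Realize M v ↔
      ¬ φ.Realize₂ M (v 0) (v 1) ∧ ∀ b, M.lt b (v 0) → φ.Realize₂ M b (v 1) := by
  have hsub (a : M.carrier) :
      (φ.subst 0 v2).Realize M (Function.update v 2 a) ↔ φ.Realize₂ M a (v 1) := by
    rw [Formula.realize_subst (by simpa [v2, Term.varsOf] using hφ2),
      Formula.realize_iff_realize₂ hφ]
    simp [v2, Term.val]
  simp only [psiOf, Formula.Realize, hsub, Formula.realize_iff_realize₂ hφ]
  simp [v0, v2, Term.val]

theorem names_psiOf_subst (hT : ∀ σ ∈ T, σ.IsSentence) (hQT : QAxioms ⊆ T)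
    (hφ : φ.freeVars ⊆ {0, 1}) (hφ2 : 2 ∉ φ.allVars) (hσ₁ : IsSigma1 φ) {s : Term}
    (hs : s.varsOf = ∅) {j : ℕ}
    (hsj : ∀ M : Struct, M.IsQModel → ∀ v : ℕ → M.carrier, s.val M v = M.emb j)
    {n : ℕ} (hlt : ∀ m < n, φ.Realize₂ stdModel m j)
    (hP : Proves T (.not ((φ.subst 0 (numeral n)).subst 1 s))) :
    Names T ((psiOf φ).subst 1 s) n := by
  refine ⟨fun x hx => ?_, fun M v hv => ?_⟩
  · rcases Finset.mem_union.1 (Formula.freeVars_subst 1 s _ hx) with hx | hx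
    · obtain ⟨hx1, hx⟩ := Finset.mem_erase.1 hx
      simpa [hx1] using freeVars_psiOf_subset hφ hx
    · simp [hs] at hx
  have hM := Struct.isQModel_of_realize hT hQT hv
  have hn : ¬ φ.Realize₂ M (M.emb n) (M.emb j) := by
    have := hP.realize hT hv v
    rwa [Formula.Realize, Formula.realize_subst_subst hφ (Term.varsOf_numeral n) hs,
      Term.val_numeral, hsj M hM] at this
  intro a
  simp only [Formula.iffF, Formula.Realize, ← iff_def]
  rw [Formula.realize_subst_of_closed hs, realize_psiOf hφ hφ2, hsj M hM]
  simpa [v0, Term.val] using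
    hM.least_iff (P := (φ.Realize₂ M · (M.emb j))) hn
      (fun m hm => hM.realize₂_emb_of_isSigma1 hσ₁ (hlt m hm)) a

end Berry

theorem ten_le_length_psiOf (φ : Formula) : 10 ≤ (psiOf φ).length := by
  have := Formula.length_pos φ
  have := Formula.length_pos (φ.subst 0 v2)
  simp only [psiOf, Formula.length, Formula.symbols, Term.symbols, v0, v2, List.length_append,
    List.length_cons, List.length_nil] at *
  omega

@[simp] theorem tTerm_varsOf (k : ℕ) : (tTerm k).varsOf = ∅ := by
  simp [tTerm, Term.varsOf]

theorem tTerm_length (k : ℕ) : (tTerm k).length = 2 * k + 15 := by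
  have h10 := Term.length_numeral 10
  have hk := Term.length_numeral k
  simp only [tTerm, Term.length, Term.symbols, List.length_append, List.length_cons] at *
  omega

theorem tTerm_val_stdModel (k : ℕ) (v : ℕ → ℕ) : (tTerm k).val stdModel v = 10 * (k * k) := by
  simp [tTerm, Term.val]

theorem Struct.IsQModel.tTerm_val {M : Struct} (hM : M.IsQModel) (k : ℕ) (v : ℕ → M.carrier) :
    (tTerm k).val M v = M.emb (10 * (k * k)) := by
  simp [tTerm, Term.val, hM.emb_mul]

/-- This is what the choice `k = k₁ k₂`, `t = 10 k²` is made for. -/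
theorem length_subst_tTerm_lt {θ : Formula} {k₂ k : ℕ} (h10 : 10 ≤ θ.length)
    (hk₂ : θ.countFreeOcc 1 < k₂) (hk : k = θ.length * k₂) :
    (θ.subst 1 (tTerm k)).length < 10 * (k * k) := by
  have hsub := Formula.length_subst 1 (tTerm k) θ
  rw [tTerm_length] at hsub
  set L := θ.length
  set c := θ.countFreeOcc 1
  have hck : 10 * (c + 1) ≤ k := hk ▸ Nat.mul_le_mul h10 hk₂
  have hLk : L ≤ k := hk ▸ Nat.le_mul_of_pos_right L (by omega)
  nlinarith

theorem syntactic_incompleteness_i_general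
    (T : Set Formula) (hTsent : ∀ σ ∈ T, σ.IsSentence)
    (hQT : QAxioms ⊆ T)
    (g : ℕ → ℕ) (hg : GoodBound g)
    (φ : Formula) (hφ : DefinesRel φ (BRel T g)) (hφ2 : 2 ∉ φ.allVars)
    (k₂ : ℕ) (hk₂ : (psiOf φ).countFreeOcc 1 < k₂)
    (k : ℕ) (hk : k = (psiOf φ).length * k₂)
    (n : ℕ) (hn : ¬ Nameable T (10 * (k * k)) n)
    (hleast : ∀ m < n, Nameable T (10 * (k * k)) m)
    (hphiSigma : IsSigma1 φ) :
    IsTrue (.not ((φ.subst 0 (numeral n)).subst 1 (tTerm k))) ∧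
      ¬ Proves T (.not ((φ.subst 0 (numeral n)).subst 1 (tTerm k))) := by
  have hBn : ¬ BRel T g n (10 * (k * k)) := fun ⟨μ, _, hlen, hμ⟩ => hn ⟨μ, hlen, hμ⟩
  have hlt (m : ℕ) (hm : m < n) : φ.Realize₂ stdModel m (10 * (k * k)) :=
    (hφ.iff_realize₂ _ _).1 (BRel.of_nameable hTsent hg.2 (hleast m hm))
  refine ⟨fun v h => hBn ((hφ.iff_realize₂ _ _).2 ?_),
    fun hP => hn ⟨(psiOf φ).subst 1 (tTerm k), ?_, ?_⟩⟩
  · rwa [Formula.realize_subst_subst hφ.1 (Term.varsOf_numeral n) (tTerm_varsOf k),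
      Term.val_numeral, Struct.emb_stdModel, tTerm_val_stdModel] at h
  · exact length_subst_tTerm_lt (ten_le_length_psiOf φ) hk₂ hk
  · exact names_psiOf_subst hTsent hQT hφ.1 hφ2 hphiSigma (tTerm_varsOf k)
      (fun _ hM => hM.tTerm_val k) hlt hP

/-- **Syntactic version of Gödel's first incompleteness theorem, part (i).**
If T is a consistent recursively axiomatizable extension of Q (with φ a Σ₁ formula
defining B), then T does not prove ¬φ(n,t), although ¬φ(n,t) is true. -/
theorem syntactic_incompleteness_i
    (T : Set Formula) (hTsent : ∀ σ ∈ T, σ.IsSentence)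
    (hQT : QAxioms ⊆ T) (hrec : RecursivelyAxiomatizable T) (hcons : Consistent T)
    (g : ℕ → ℕ) (hg : GoodBound g)
    (φ : Formula) (hφ : DefinesRel φ (BRel T g)) (hφ2 : 2 ∉ φ.allVars)
    (k₂ : ℕ) (hk₂ : (psiOf φ).countFreeOcc 1 < k₂)
    (k : ℕ) (hk : k = (psiOf φ).length * k₂)
    (n : ℕ) (hn : ¬ Nameable T (10 * (k * k)) n)
    (hleast : ∀ m < n, Nameable T (10 * (k * k)) m)
    (hphiSigma : IsSigma1 φ) :
    IsTrue (.not ((φ.subst 0 (numeral n)).subst 1 (tTerm k))) ∧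
      ¬ Proves T (.not ((φ.subst 0 (numeral n)).subst 1 (tTerm k))) :=
  syntactic_incompleteness_i_general T hTsent hQT g hg φ hφ hφ2 k₂ hk₂ k hk n hn hleast hphiSigma

end Boolos
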